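/- Let f be a strictly positive continuous density on [0,X] with CDF F, and suppose F(X) ≥ μ_P + μ_I with μ_P, μ_I > 0. Define X̄ = F⁻¹(μ_P + μ_I), X̄_I = F⁻¹(μ_I), X̄_P = F⁻¹(μ_P). Given a continuous strictly quasi-concave g on [0, X̄] with g(X̄_I) > g(X̄) and g(X̄_P) > g(0), there exists a unique pair 0 < x₁ < x₂ < X̄ satisfying g(x₁) = g(x₂) and F(x₂) − F(x₁) = μ_P. -/

import Mathlib

/-!
Extend the CDF `F`, which is continuous and strictly increasing on `[0, X]`, to an order
automorphism `e` of `ℝ` and put `ψ x = e⁻¹ (e x + μ_P)`; the pairs with `F x₂ - F x₁ = μ_P` are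
exactly the pairs `(x, ψ x)`. On `[0, X̄_I]` the function `x ↦ g (ψ x) - g x` runs from
`g X̄_P - g 0 > 0` to `g X̄ - g X̄_I < 0`, so it vanishes somewhere. Two different solutions would
be two interlaced pairs of equal `g`-values, which strict quasi-concavity rules out.
-/

open Set MeasureTheory intervalIntegral

def StrictQuasiconcaveOn (s : Set ℝ) (g : ℝ → ℝ) : Prop :=
  ∀ a ∈ s, ∀ b ∈ s, a ≠ b → ∀ l ∈ Ioo (0:ℝ) 1, min (g a) (g b) < g (l * a + (1 - l) * b)

namespace StrictQuasiconcaveOn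

variable {s : Set ℝ} {g : ℝ → ℝ}

theorem min_lt_of_mem_Ioo (hg : StrictQuasiconcaveOn s g) {a b t : ℝ} (ha : a ∈ s) (hb : b ∈ s)
    (ht : t ∈ Ioo a b) : min (g a) (g b) < g t := by
  obtain ⟨hat, htb⟩ := ht
  have hl : (b - t) / (b - a) ∈ Ioo (0:ℝ) 1 :=
    ⟨div_pos (by linarith) (by linarith), (div_lt_one (by linarith)).2 (by linarith)⟩
  have hcomb : (b - t) / (b - a) * a + (1 - (b - t) / (b - a)) * b = t := by
    field_simp [show b - a ≠ 0 by linarith]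
    ring
  simpa only [hcomb] using hg a ha b hb (hat.trans htb).ne _ hl

/-- Pairs of points with equal values of `g` are nested, never interlaced. -/
theorem lt_of_eq_of_eq (hg : StrictQuasiconcaveOn s g) {a₁ a₂ b₁ b₂ : ℝ}
    (ha₁ : a₁ ∈ s) (ha₂ : a₂ ∈ s) (hb₁ : b₁ ∈ s) (hb₂ : b₂ ∈ s)
    (ha : a₁ < a₂) (hb : b₁ < b₂) (hab : a₁ < b₁) (hga : g a₁ = g a₂) (hgb : g b₁ = g b₂) :
    b₂ < a₂ := by
  by_contra! h
  rcases lt_or_ge b₁ a₂ with hba | hab₂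
  · have h₁ := hg.min_lt_of_mem_Ioo ha₁ ha₂ ⟨hab, hba⟩
    rcases h.lt_or_eq with h₂ | h₂
    · have h₃ := hg.min_lt_of_mem_Ioo hb₁ hb₂ ⟨hba, h₂⟩
      rw [hga, min_self] at h₁
      rw [hgb, min_self] at h₃
      linarith
    · rw [hga, min_self, h₂, ← hgb] at h₁
      exact h₁.false
  · have h₁ := hg.min_lt_of_mem_Ioo ha₁ hb₂ ⟨ha, hab₂.trans_lt hb⟩
    rw [hga, ← hgb, min_lt_iff] at h₁
    rcases hab₂.lt_or_eq with h₂ | h₂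
    · have h₃ := hg.min_lt_of_mem_Ioo ha₂ hb₂ ⟨h₂, hb⟩
      rw [← hgb, min_lt_iff] at h₃
      rcases h₁ with h₁ | h₁ <;> rcases h₃ with h₃ | h₃ <;> linarith
    · rw [h₂] at h₁
      rcases h₁ with h₁ | h₁ <;> exact h₁.false

end StrictQuasiconcaveOn

theorem exists_orderIso_eqOn_Icc {F : ℝ → ℝ} {a b : ℝ} (hab : a ≤ b)
    (hcont : ContinuousOn F (Icc a b)) (hmono : StrictMonoOn F (Icc a b)) :
    ∃ e : ℝ ≃o ℝ, EqOn e F (Icc a b) := by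
  set p : ℝ → ℝ := fun y => projIcc a b hab y
  have hp_mem : ∀ y, p y ∈ Icc a b := fun y => (projIcc a b hab y).2
  have hp_mono : Monotone p := fun y z h => monotone_projIcc hab h
  have hp_sub : ∀ y z, y ≤ z → p z - p y ≤ z - y := by
    intro y z h
    simp only [p, coe_projIcc]
    grind
  -- `F` on `[a, b]`, continued with slope one on both sides
  set G : ℝ → ℝ := fun y => F (p y) + (y - p y)
  have hG_cont : Continuous G :=
    (hcont.comp_continuous (continuous_subtype_val.comp continuous_projIcc) hp_mem).add
      (continuous_id.sub (continuous_subtype_val.comp continuous_projIcc))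
  have hG_mono : StrictMono G := by
    intro y z h
    have hsub := hp_sub y z h.le
    rcases (hp_mono h.le).lt_or_eq with hlt | heq
    · have := hmono (hp_mem y) (hp_mem z) hlt
      simp only [G]
      linarith
    · simp only [G, heq]
      linarith
  have hG_surj : Function.Surjective G := by
    have hlow : ∀ y, F a + (y - b) ≤ G y := fun y =>
      add_le_add (hmono.monotoneOn (left_mem_Icc.2 hab) (hp_mem y) (hp_mem y).1)
        (by linarith [(hp_mem y).2])
    have hup : ∀ y, G y ≤ F b + (y - a) := fun y =>
      add_le_add (hmono.monotoneOn (hp_mem y) (right_mem_Icc.2 hab) (hp_mem y).2)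
        (by linarith [(hp_mem y).1])
    refine hG_cont.surjective (Filter.tendsto_atTop_mono hlow ?_)
      (Filter.tendsto_atBot_mono hup ?_)
    · exact Filter.tendsto_atTop_add_const_left _ _
        (Filter.tendsto_atTop_add_const_right _ _ Filter.tendsto_id)
    · exact Filter.tendsto_atBot_add_const_left _ _
        (Filter.tendsto_atBot_add_const_right _ _ Filter.tendsto_id)
  refine ⟨hG_mono.orderIsoOfSurjective G hG_surj, fun y hy => ?_⟩
  simp [G, p, projIcc_of_mem hab hy]

theorem strictMonoOn_primitive_of_pos {f : ℝ → ℝ} {a b : ℝ} (hf : ContinuousOn f (Icc a b))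
    (hpos : ∀ x ∈ Icc a b, 0 < f x) : StrictMonoOn (fun y => ∫ t in a..y, f t) (Icc a b) := by
  have hint : ∀ y ∈ Icc a b, IntervalIntegrable f volume a y := fun y hy =>
    (hf.mono (by rw [uIcc_of_le hy.1]; exact Icc_subset_Icc_right hy.2)).intervalIntegrable
  intro y hy z hz hyz
  have hyz_int : IntervalIntegrable f volume y z := (hint y hy).symm.trans (hint z hz)
  have hpos' : 0 < ∫ t in y..z, f t :=
    intervalIntegral_pos_of_pos_on hyz_int
      (fun x hx => hpos x ⟨hy.1.trans hx.1.le, hx.2.le.trans hz.2⟩) hyz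
  have := integral_interval_sub_left (hint z hz) (hint y hy)
  dsimp only
  linarith

theorem existsUnique_eq_of_orderIso_sub_eq (e : ℝ ≃o ℝ) {g : ℝ → ℝ} {a b u v c : ℝ}
    (hc : 0 < c) (hg : ContinuousOn g (Icc a b)) (hqc : StrictQuasiconcaveOn (Icc a b) g)
    (hau : a ≤ u) (hv : e v = e a + c) (hu : e b = e u + c)
    (hgu : g b < g u) (hgv : g a < g v) :
    ∃! p : ℝ × ℝ, a < p.1 ∧ p.1 < p.2 ∧ p.2 < b ∧ g p.1 = g p.2 ∧ e p.2 - e p.1 = c := by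
  set ψ : ℝ → ℝ := fun x => e.symm (e x + c)
  have hψ : ∀ x, e (ψ x) = e x + c := fun x => e.apply_symm_apply _
  have hub : u ≤ b := e.le_iff_le.1 (by linarith)
  have hav : a ≤ v := e.le_iff_le.1 (by linarith)
  have hψ_mem : ∀ x ∈ Icc a u, ψ x ∈ Icc a b := fun x hx =>
    ⟨hav.trans (e.le_iff_le.1 (by rw [hv, hψ]; linarith [e.monotone hx.1])),
      e.le_iff_le.1 (by rw [hu, hψ]; linarith [e.monotone hx.2])⟩
  have hh_cont : ContinuousOn (fun x => g (ψ x) - g x) (Icc a u) :=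
    (hg.comp (e.symm.continuous.comp (e.continuous.add continuous_const)).continuousOn
      hψ_mem).sub (hg.mono (Icc_subset_Icc_right hub))
  have hψa : ψ a = v := e.injective (by rw [hψ, hv])
  have hψu : ψ u = b := e.injective (by rw [hψ, hu])
  have hsign : (0:ℝ) ∈ Ioo (g (ψ u) - g u) (g (ψ a) - g a) := by
    rw [hψu, hψa]
    exact ⟨by linarith, by linarith⟩
  obtain ⟨x, ⟨hax, hxu⟩, hx⟩ := intermediate_value_Ioo' hau hh_cont hsign
  have hsol_snd : ∀ p : ℝ × ℝ, e p.2 - e p.1 = c → p.2 = ψ p.1 := fun p hp =>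
    e.injective (by rw [hψ]; linarith)
  have hsol_fst_le : ∀ p q : ℝ × ℝ,
      (a < p.1 ∧ p.1 < p.2 ∧ p.2 < b ∧ g p.1 = g p.2 ∧ e p.2 - e p.1 = c) →
      (a < q.1 ∧ q.1 < q.2 ∧ q.2 < b ∧ g q.1 = g q.2 ∧ e q.2 - e q.1 = c) → p.1 ≤ q.1 := by
    rintro p q ⟨hp₁, hp₁₂, hp₂, hgp, hep⟩ ⟨hq₁, hq₁₂, hq₂, hgq, heq⟩
    by_contra! hlt
    have hq₂p₂ : q.2 < p.2 := e.lt_iff_lt.1 (by linarith [e.strictMono hlt])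
    exact (hqc.lt_of_eq_of_eq ⟨hq₁.le, (hq₁₂.trans hq₂).le⟩ ⟨(hq₁.trans hq₁₂).le, hq₂.le⟩
      ⟨hp₁.le, (hp₁₂.trans hp₂).le⟩ ⟨(hp₁.trans hp₁₂).le, hp₂.le⟩
      hq₁₂ hp₁₂ hlt hgq hgp).not_gt hq₂p₂
  have hsol : a < x ∧ x < ψ x ∧ ψ x < b ∧ g x = g (ψ x) ∧ e (ψ x) - e x = c :=
    ⟨hax, e.lt_iff_lt.1 (by linarith [hψ x]),
      e.lt_iff_lt.1 (by rw [hψ, hu]; linarith [e.strictMono hxu]),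
      (sub_eq_zero.1 hx).symm, by rw [hψ]; ring⟩
  refine ⟨(x, ψ x), hsol, fun q hq => ?_⟩
  have hq₁ : q.1 = x :=
    le_antisymm (hsol_fst_le q (x, ψ x) hq hsol) (hsol_fst_le (x, ψ x) q hsol hq)
  exact Prod.ext hq₁ (by rw [hsol_snd q hq.2.2.2.2, hq₁])

theorem stmt17_general (X : ℝ) (hX : 0 < X)
    (f : ℝ → ℝ) (hf : ContinuousOn f (Icc 0 X)) (hfpos : ∀ x ∈ Icc (0:ℝ) X, 0 < f x)
    (μP μI : ℝ) (hμP : 0 < μP)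
    (F : ℝ → ℝ) (hF : ∀ y ∈ Icc (0:ℝ) X, F y = ∫ t in (0:ℝ)..y, f t)
    (Xb XbI XbP : ℝ)
    (hXb : Xb ∈ Icc (0:ℝ) X) (hXbI : XbI ∈ Icc (0:ℝ) X) (hXbP : XbP ∈ Icc (0:ℝ) X)
    (hFXb : F Xb = μP + μI) (hFXbI : F XbI = μI) (hFXbP : F XbP = μP)
    (g : ℝ → ℝ) (hg : ContinuousOn g (Icc 0 Xb))
    (hqc : ∀ a ∈ Icc (0:ℝ) Xb, ∀ b ∈ Icc (0:ℝ) Xb, a ≠ b → ∀ l ∈ Ioo (0:ℝ) 1,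
      min (g a) (g b) < g (l * a + (1 - l) * b))
    (h1 : g Xb < g XbI) (h2 : g 0 < g XbP) :
    ∃! p : ℝ × ℝ, 0 < p.1 ∧ p.1 < p.2 ∧ p.2 < Xb ∧
      g p.1 = g p.2 ∧ F p.2 - F p.1 = μP := by
  have hprim_cont : ContinuousOn (fun y => ∫ t in (0:ℝ)..y, f t) (Icc 0 X) := by
    rw [← uIcc_of_le hX.le] at hf ⊢
    exact continuousOn_primitive_interval hf.integrableOn_uIcc
  obtain ⟨e, he⟩ := exists_orderIso_eqOn_Icc hX.le hprim_cont
    (strictMonoOn_primitive_of_pos hf hfpos)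
  have heF : EqOn e F (Icc 0 X) := fun y hy => (he hy).trans (hF y hy).symm
  have he0 : e 0 = 0 := by simp [he (left_mem_Icc.2 hX.le)]
  have key := existsUnique_eq_of_orderIso_sub_eq e hμP hg hqc hXbI.1
    (by rw [heF hXbP, hFXbP, he0, zero_add]) (by rw [heF hXb, heF hXbI, hFXb, hFXbI, add_comm])
    h1 h2
  refine (existsUnique_congr fun p => ?_).1 key
  refine and_congr_right fun hp₁ => and_congr_right fun hp₁₂ => and_congr_right fun hp₂ => ?_
  have hmem : ∀ y, 0 < y → y < Xb → y ∈ Icc (0:ℝ) X := fun y h₀ h₁ => ⟨h₀.le, h₁.le.trans hXb.2⟩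
  rw [heF (hmem _ hp₁ (hp₁₂.trans hp₂)), heF (hmem _ (hp₁.trans hp₁₂) hp₂)]

/-- existence and uniqueness of the IPI interval boundaries in the
first-best allocation: given a continuous strictly quasi-concave `g` on `[0, X̄]` with
`g(X̄_I) > g(X̄)` and `g(X̄_P) > g(0)`, there is a unique pair `0 < x₁ < x₂ < X̄` with
`g(x₁) = g(x₂)` and `F(x₂) − F(x₁) = μ_P`. -/
theorem stmt17 (X : ℝ) (hX : 0 < X)
    (f : ℝ → ℝ) (hf : ContinuousOn f (Icc 0 X)) (hfpos : ∀ x ∈ Icc (0:ℝ) X, 0 < f x)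
    (μP μI : ℝ) (hμP : 0 < μP) (hμI : 0 < μI)
    (F : ℝ → ℝ) (hF : ∀ y ∈ Icc (0:ℝ) X, F y = ∫ t in (0:ℝ)..y, f t)
    (hsup : μP + μI ≤ F X)
    (Xb XbI XbP : ℝ)
    (hXb : Xb ∈ Icc (0:ℝ) X) (hXbI : XbI ∈ Icc (0:ℝ) X) (hXbP : XbP ∈ Icc (0:ℝ) X)
    (hFXb : F Xb = μP + μI) (hFXbI : F XbI = μI) (hFXbP : F XbP = μP)
    (g : ℝ → ℝ) (hg : ContinuousOn g (Icc 0 Xb))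
    (hqc : ∀ a ∈ Icc (0:ℝ) Xb, ∀ b ∈ Icc (0:ℝ) Xb, a ≠ b → ∀ l ∈ Ioo (0:ℝ) 1,
      min (g a) (g b) < g (l * a + (1 - l) * b))
    (h1 : g Xb < g XbI) (h2 : g 0 < g XbP) :
    ∃! p : ℝ × ℝ, 0 < p.1 ∧ p.1 < p.2 ∧ p.2 < Xb ∧
      g p.1 = g p.2 ∧ F p.2 - F p.1 = μP :=
  stmt17_general X hX f hf hfpos μP μI hμP F hF Xb XbI XbP hXb hXbI hXbP hFXb hFXbI hFXbP g hg hqc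
    h1 h2
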